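/- arXiv:2101.07711 — 6 statements merged into one kernel-verified Lean document; each statement's English description precedes it below -/
import Mathlib

section
/- Every congruence ρ on the commutative monoid ℕ^P (P finite) is generated by the set ρ_B of minimal elements (with respect to the componentwise product order on pairs) of {(r,s) ∈ ρ | r ≠ s}; that is, the least congruence containing ρ_B equals ρ. -/
/-- A congruence on `ℕ^P`, given as a set of pairs: an equivalence compatible with addition. -/
def IsCongS {P : Type} (ρ : Set ((P → ℕ) × (P → ℕ))) : Prop :=
  Equivalence (fun r s => (r, s) ∈ ρ) ∧ ∀ r₁ r₂ s, (r₁, r₂) ∈ ρ → (r₁ + s, r₂ + s) ∈ ρ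

/-- The basis `ρ_B` of `ρ`: the minimal elements (w.r.t. the componentwise product order
on pairs) of the set of non-identity pairs of `ρ`. -/
def basisOf {P : Type} (ρ : Set ((P → ℕ) × (P → ℕ))) : Set ((P → ℕ) × (P → ℕ)) :=
  {q | q ∈ ρ ∧ q.1 ≠ q.2 ∧ ∀ q', q' ∈ ρ → q'.1 ≠ q'.2 → q' ≤ q → q' = q}

/-!
Fix a term order `≺` on `ℕ^P`: a well-order compatible with addition (the lexicographic one).
Let `m` be the `≺`-least element of a class of `ρ` and `a ≠ m` another element of it. Some basis
pair `(c, d)` lies below `(a, m)`, and `d ≺ c`: otherwise `c + (m - d)` would be an element of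
the class strictly below `m`. Hence `a` is joined, by a single step of any congruence containing
the basis, to the element `d + (a - c) ≺ a` of the same class, and well-foundedness of `≺` brings
`a` down to `m`.
-/

variable {P : Type}

lemma basisOf_subset (ρ : Set ((P → ℕ) × (P → ℕ))) : basisOf ρ ⊆ ρ := fun _ hq => hq.1

lemma exists_mem_basisOf_le [Finite P] {ρ : Set ((P → ℕ) × (P → ℕ))} {p : (P → ℕ) × (P → ℕ)}
    (hp : p ∈ ρ) (hne : p.1 ≠ p.2) : ∃ q ∈ basisOf ρ, q ≤ p := by
  obtain ⟨q, ⟨hqρ, hqne, hqp⟩, hmin⟩ :=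
    wellFounded_lt.has_min {q | q ∈ ρ ∧ q.1 ≠ q.2 ∧ q ≤ p} ⟨p, hp, hne, le_rfl⟩
  refine ⟨q, ⟨hqρ, hqne, fun q' hq'ρ hq'ne hq'q => ?_⟩, hqp⟩
  by_contra h
  exact hmin q' ⟨hq'ρ, hq'ne, hq'q.trans hqp⟩ (lt_of_le_of_ne hq'q h)

lemma IsCongS.mem_add_tsub {ρ : Set ((P → ℕ) × (P → ℕ))} (hρ : IsCongS ρ) {a c d : P → ℕ}
    (hcd : (c, d) ∈ ρ) (hca : c ≤ a) : (a, d + (a - c)) ∈ ρ := by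
  simpa only [add_tsub_cancel_of_le hca] using hρ.2 c d (a - c) hcd

lemma exists_injective_addMonoidHom_lex [Finite P] :
    ∃ f : (P → ℕ) →+ Lex (Fin (Nat.card P) → ℕ), Function.Injective f := by
  let e := Finite.equivFin P
  refine ⟨{ toFun := fun a => toLex (a ∘ e.symm), map_zero' := rfl, map_add' := fun _ _ => rfl },
    fun a b hab => ?_⟩
  exact e.symm.surjective.injective_comp_right (toLex.injective hab)

section TermOrder

variable {M : Type*} [AddCommMonoid M] [LinearOrder M] [IsOrderedCancelAddMonoid M]

lemma map_add_tsub_lt (f : (P → ℕ) →+ M) {a c d : P → ℕ} (h : f d < f c) (hca : c ≤ a) :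
    f (d + (a - c)) < f a :=
  calc f (d + (a - c)) = f d + f (a - c) := map_add f d (a - c)
    _ < f c + f (a - c) := add_lt_add_left h _
    _ = f a := by rw [← map_add, add_tsub_cancel_of_le hca]

def IsLeastInClass (f : (P → ℕ) →+ M) (ρ : Set ((P → ℕ) × (P → ℕ))) (m : P → ℕ) : Prop :=
  ∀ x, (m, x) ∈ ρ → f m ≤ f x

variable {f : (P → ℕ) →+ M} {ρ : Set ((P → ℕ) × (P → ℕ))} {m : P → ℕ}

lemma IsLeastInClass.map_lt_of_le (hm : IsLeastInClass f ρ m) (hf : Function.Injective f)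
    (hρ : IsCongS ρ) {c d : P → ℕ} (hcd : (c, d) ∈ ρ) (hne : c ≠ d) (hdm : d ≤ m) :
    f d < f c := by
  refine lt_of_le_of_ne (not_lt.mp fun hcd' => ?_) (hf.ne hne.symm)
  exact (hm _ (hρ.mem_add_tsub (hρ.1.symm hcd) hdm)).not_gt (map_add_tsub_lt f hcd' hdm)

lemma IsLeastInClass.mem_of_mem [Finite P] [WellFoundedLT M] (hm : IsLeastInClass f ρ m)
    (hf : Function.Injective f) (hρ : IsCongS ρ) {σ : Set ((P → ℕ) × (P → ℕ))} (hσ : IsCongS σ)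
    (hB : basisOf ρ ⊆ σ) (a : P → ℕ) (ham : (a, m) ∈ ρ) : (a, m) ∈ σ := by
  induction a using (InvImage.wf f wellFounded_lt).induction with
  | _ a ih =>
  by_cases hame : a = m
  · exact hame ▸ hσ.1.refl m
  obtain ⟨⟨c, d⟩, hcd, hle⟩ := exists_mem_basisOf_le ham hame
  have hdc : f d < f c := hm.map_lt_of_le hf hρ hcd.1 hcd.2.1 hle.2
  have hstep_ρ := hρ.mem_add_tsub hcd.1 hle.1
  refine hσ.1.trans (hσ.mem_add_tsub (hB hcd) hle.1) (ih _ (map_add_tsub_lt f hdc hle.1) ?_)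
  exact hρ.1.trans (hρ.1.symm hstep_ρ) ham

end TermOrder

lemma IsCongS.subset_of_basisOf_subset [Finite P] {ρ σ : Set ((P → ℕ) × (P → ℕ))}
    (hρ : IsCongS ρ) (hσ : IsCongS σ) (hB : basisOf ρ ⊆ σ) : ρ ⊆ σ := by
  rintro ⟨a, b⟩ hab
  obtain ⟨f, hf⟩ := exists_injective_addMonoidHom_lex (P := P)
  let m := Function.argminOn f {x | (a, x) ∈ ρ} ⟨b, hab⟩
  have ham : (a, m) ∈ ρ := Function.argminOn_mem f {x | (a, x) ∈ ρ} ⟨b, hab⟩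
  have hm : IsLeastInClass f ρ m := fun x hx => Function.argminOn_le f _ (hρ.1.trans ham hx)
  have hbm : (b, m) ∈ ρ := hρ.1.trans (hρ.1.symm hab) ham
  exact hσ.1.trans (hm.mem_of_mem hf hρ hσ hB a ham) (hσ.1.symm (hm.mem_of_mem hf hρ hσ hB b hbm))

/-- Every congruence `ρ` on `ℕ^P` (for finite `P`) is generated by its basis `ρ_B`:
the least congruence containing `ρ_B` equals `ρ`. -/
theorem congruence_generated_by_basis {P : Type} [Fintype P]
    (ρ : Set ((P → ℕ) × (P → ℕ))) (hρ : IsCongS ρ) :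
    ⋂₀ {σ | IsCongS σ ∧ basisOf ρ ⊆ σ} = ρ :=
  subset_antisymm (Set.sInter_subset_of_mem ⟨hρ, basisOf_subset ρ⟩)
    (Set.subset_sInter fun _ ⟨hσ, hB⟩ => hρ.subset_of_basisOf_subset hσ hB)
end

section
/- Resource similarity ≈ (defined by r ≈ s iff (r+w) ∼ (s+w) for all markings w) is the largest congruence on markings included in bisimilarity ∼. -/
/-- A labeled Petri net: places `P`, transitions `T`, action labels `Act`. -/
structure LPN (P T Act : Type) where
  pre : T → P → ℕ
  post : T → P → ℕ
  lab : T → Act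

variable {P T Act : Type}

/-- Firing relation: `M` fires `t` yielding `M'`. -/
def Fires (N : LPN P T Act) (M : P → ℕ) (t : T) (M' : P → ℕ) : Prop :=
  N.pre t ≤ M ∧ M' = fun p => M p - N.pre t p + N.post t p

/-- `R` satisfies the (ordinary) transfer property w.r.t. `R'`. -/
def Transfer (N : LPN P T Act) (R R' : (P → ℕ) → (P → ℕ) → Prop) : Prop :=
  ∀ M₁ M₂, R M₁ M₂ → ∀ t M₁', Fires N M₁ t M₁' →
    ∃ u M₂', N.lab u = N.lab t ∧ Fires N M₂ u M₂' ∧ R' M₁' M₂'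

/-- `R` is a bisimulation. -/
def IsBisim (N : LPN P T Act) (R : (P → ℕ) → (P → ℕ) → Prop) : Prop :=
  Transfer N R R ∧ Transfer N (fun a b => R b a) (fun a b => R b a)

/-- Bisimilarity `∼`. -/
def Bisim (N : LPN P T Act) (M₁ M₂ : P → ℕ) : Prop :=
  ∃ R, IsBisim N R ∧ R M₁ M₂

/-- A congruence on markings: an equivalence compatible with addition. -/
def IsCongruence (ρ : (P → ℕ) → (P → ℕ) → Prop) : Prop :=
  Equivalence ρ ∧ ∀ r₁ r₂ s, ρ r₁ r₂ → ρ (r₁ + s) (r₂ + s)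

/-- Resource similarity `≈`. -/
def ResSim (N : LPN P T Act) (r s : P → ℕ) : Prop :=
  ∀ w, Bisim N (r + w) (s + w)

/-- `R` satisfies the resource transfer property w.r.t. `R'`. -/
def ResTransfer (N : LPN P T Act) (R R' : (P → ℕ) → (P → ℕ) → Prop) : Prop :=
  ∀ r s, R r s → ∀ t r', Fires N (fun p => r p + (N.pre t p - r p)) t r' →
    ∃ u s', N.lab u = N.lab t ∧
      Fires N (fun p => s p + (N.pre t p - r p)) u s' ∧ R' r' s'

/-- `R` is a resource bisimulation. -/
def IsResBisim (N : LPN P T Act) (R : (P → ℕ) → (P → ℕ) → Prop) : Prop :=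
  ResTransfer N R R ∧ ResTransfer N (fun a b => R b a) (fun a b => R b a)

/-- Resource bisimilarity `≃`. -/
def ResBisim (N : LPN P T Act) (r s : P → ℕ) : Prop :=
  ∃ R, IsResBisim N R ∧ R r s

/-- Stratified bisimilarity `∼ᵢ`. -/
def Strat (N : LPN P T Act) : ℕ → (P → ℕ) → (P → ℕ) → Prop
  | 0, _, _ => True
  | i + 1, M₁, M₂ =>
      (∀ t M₁', Fires N M₁ t M₁' →
        ∃ u M₂', N.lab u = N.lab t ∧ Fires N M₂ u M₂' ∧ Strat N i M₁' M₂') ∧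
      (∀ t M₂', Fires N M₂ t M₂' →
        ∃ u M₁', N.lab u = N.lab t ∧ Fires N M₁ u M₁' ∧ Strat N i M₂' M₁')

/-- Stratified resource bisimilarity `≃ᵢ`. -/
def StratRes (N : LPN P T Act) : ℕ → (P → ℕ) → (P → ℕ) → Prop
  | 0, _, _ => True
  | i + 1, r, s =>
      (∀ t r', Fires N (fun p => r p + (N.pre t p - r p)) t r' →
        ∃ u s', N.lab u = N.lab t ∧
          Fires N (fun p => s p + (N.pre t p - r p)) u s' ∧ StratRes N i r' s') ∧
      (∀ t s', Fires N (fun p => s p + (N.pre t p - s p)) t s' →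
        ∃ u r', N.lab u = N.lab t ∧
          Fires N (fun p => r p + (N.pre t p - s p)) u r' ∧ StratRes N i s' r')

/-- The equivalence level: the largest `i` with `r ≃ᵢ s` (`⊤` = ω if all `i`). -/
noncomputable def eqlev (N : LPN P T Act) (r s : P → ℕ) : ℕ∞ :=
  sSup {n : ℕ∞ | ∃ i : ℕ, n = (i : ℕ∞) ∧ StratRes N i r s}

lemma IsBisim.comp {N : LPN P T Act} {R S : (P → ℕ) → (P → ℕ) → Prop}
    (hR : IsBisim N R) (hS : IsBisim N S) :
    IsBisim N (Relation.Comp R S) := by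
  refine ⟨?_, ?_⟩
  · rintro a c ⟨b, hab, hbc⟩ t a' hfire
    obtain ⟨u, b', hlab, hfire_b, hab'⟩ := hR.1 a b hab t a' hfire
    obtain ⟨v, c', hlab', hfire_c, hbc'⟩ := hS.1 b c hbc u b' hfire_b
    exact ⟨v, c', hlab'.trans hlab, hfire_c, b', hab', hbc'⟩
  · rintro c a ⟨b, hab, hbc⟩ t c' hfire
    obtain ⟨u, b', hlab, hfire_b, hbc'⟩ := hS.2 c b hbc t c' hfire
    obtain ⟨v, a', hlab', hfire_a, hab'⟩ := hR.2 b a hab u b' hfire_b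
    exact ⟨v, a', hlab'.trans hlab, hfire_a, b', hab', hbc'⟩

namespace Bisim

variable {N : LPN P T Act}

protected lemma refl (M : P → ℕ) : Bisim N M M := by
  refine ⟨Eq, ⟨?_, ?_⟩, rfl⟩ <;>
  · rintro M₁ _ rfl t M₁' hfire
    exact ⟨t, M₁', rfl, hfire, rfl⟩

protected lemma symm {M₁ M₂ : P → ℕ} : Bisim N M₁ M₂ → Bisim N M₂ M₁ :=
  fun ⟨R, ⟨hfwd, hbwd⟩, hR⟩ => ⟨fun a b => R b a, ⟨hbwd, hfwd⟩, hR⟩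

protected lemma trans {M₁ M₂ M₃ : P → ℕ} :
    Bisim N M₁ M₂ → Bisim N M₂ M₃ → Bisim N M₁ M₃ :=
  fun ⟨R, hR, h₁₂⟩ ⟨S, hS, h₂₃⟩ => ⟨Relation.Comp R S, hR.comp hS, M₂, h₁₂, h₂₃⟩

end Bisim

namespace ResSim

variable {N : LPN P T Act}

lemma equivalence : Equivalence (ResSim N) :=
  ⟨fun _ _ => Bisim.refl _, fun h w => (h w).symm, fun h h' w => (h w).trans (h' w)⟩

lemma add_right {r₁ r₂ : P → ℕ} (h : ResSim N r₁ r₂) (s : P → ℕ) :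
    ResSim N (r₁ + s) (r₂ + s) := by
  intro w
  simpa only [add_assoc] using h (s + w)

lemma isCongruence : IsCongruence (ResSim N) :=
  ⟨equivalence, fun _ _ s h => h.add_right s⟩

lemma bisim {r s : P → ℕ} (h : ResSim N r s) : Bisim N r s := by
  simpa only [add_zero] using h 0

end ResSim

lemma IsCongruence.resSim_of_le_bisim {N : LPN P T Act} {ρ : (P → ℕ) → (P → ℕ) → Prop}
    (hρ : IsCongruence ρ) (hle : ∀ r s, ρ r s → Bisim N r s) {r s : P → ℕ} (h : ρ r s) :
    ResSim N r s :=
  fun w => hle _ _ (hρ.2 r s w h)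

/-- Resource similarity `≈` is the largest congruence on markings included in `∼`. -/
theorem resSim_largest_congruence (N : LPN P T Act) :
    IsCongruence (ResSim N) ∧ (∀ r s : P → ℕ, ResSim N r s → Bisim N r s) ∧
      ∀ ρ, IsCongruence ρ → (∀ r s : P → ℕ, ρ r s → Bisim N r s) →
        ∀ r s, ρ r s → ResSim N r s :=
  ⟨ResSim.isCongruence, fun _ _ => ResSim.bisim,
    fun _ hρ hle _ _ => hρ.resSim_of_le_bisim hle⟩
end

section
/- Resource bisimilarity ≃ is a congruence: if r ≃ s then (r + w) ≃ (s + w) for every marking w; concretely, the relation R = {(r+w, s+w) | r ≃ s, w ∈ ℕ^P} is a resource bisimulation. -/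
variable {P T Act : Type}

/-!
Topping `r + w` up to the preset of `t` gives the same marking as topping `r` up and then adding
`w' = w - (pre t - r)`. Hence a resource move of `r + w` is a resource move of `r` padded by `w'`,
and the answer of `s` padded by the same `w'` is an answer of `s + w`. So adding a common marking
preserves the resource transfer property, and `≃` is itself a resource bisimulation.
-/

theorem Fires.add_right {N : LPN P T Act} {M M' : P → ℕ} {t : T} (h : Fires N M t M')
    (w : P → ℕ) : Fires N (M + w) t (M' + w) := by
  obtain ⟨hle, rfl⟩ := h
  refine ⟨hle.trans le_self_add, funext fun p => ?_⟩
  have : N.pre t p ≤ M p := hle p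
  simp only [Pi.add_apply]
  omega

theorem Fires.exists_of_add_right {N : LPN P T Act} {M w M'' : P → ℕ} {t : T}
    (h : Fires N (M + w) t M'') (hle : N.pre t ≤ M) : ∃ M', Fires N M t M' ∧ M'' = M' + w := by
  obtain ⟨-, rfl⟩ := h
  refine ⟨_, ⟨hle, rfl⟩, funext fun p => ?_⟩
  have : N.pre t p ≤ M p := hle p
  simp only [Pi.add_apply]
  omega

def AddClosure (R : (P → ℕ) → (P → ℕ) → Prop) (a b : P → ℕ) : Prop :=
  ∃ r s w : P → ℕ, R r s ∧ a = r + w ∧ b = s + w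

theorem addClosure_swap (R : (P → ℕ) → (P → ℕ) → Prop) :
    AddClosure (fun a b => R b a) = fun a b => AddClosure R b a := by
  funext a b
  exact propext ⟨fun ⟨r, s, w, h, ha, hb⟩ => ⟨s, r, w, h, hb, ha⟩,
    fun ⟨r, s, w, h, hb, ha⟩ => ⟨s, r, w, h, ha, hb⟩⟩

theorem add_tsub_add_eq_tsub_add_tsub (r w c : P → ℕ) :
    w + (c - (r + w)) = c - r + (w - (c - r)) := by
  funext p
  simp only [Pi.add_apply, Pi.sub_apply]
  omega

theorem ResTransfer.addClosure {N : LPN P T Act} {R R' : (P → ℕ) → (P → ℕ) → Prop}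
    (h : ResTransfer N R R') : ResTransfer N (AddClosure R) (AddClosure R') := by
  rintro _ _ ⟨r, s, w, hrs, rfl, rfl⟩ t a' ha'
  set d := N.pre t - r
  have top_up (x : P → ℕ) : x + w + (N.pre t - (r + w)) = x + d + (w - d) := by
    rw [add_assoc, add_tsub_add_eq_tsub_add_tsub, add_assoc]
  have ha' : Fires N (r + d + (w - d)) t a' := top_up r ▸ ha'
  obtain ⟨r', hr', rfl⟩ := ha'.exists_of_add_right le_add_tsub
  obtain ⟨u, s', hlab, hs', hR'⟩ := h r s hrs t r' hr'
  have hs' : Fires N (s + d) u s' := hs'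
  have hs'w := hs'.add_right (w - d)
  rw [← top_up s] at hs'w
  exact ⟨u, _, hlab, hs'w, r', s', _, hR', rfl, rfl⟩

theorem IsResBisim.addClosure {N : LPN P T Act} {R : (P → ℕ) → (P → ℕ) → Prop}
    (h : IsResBisim N R) : IsResBisim N (AddClosure R) :=
  ⟨h.1.addClosure, addClosure_swap R ▸ h.2.addClosure⟩

theorem isResBisim_resBisim (N : LPN P T Act) : IsResBisim N (ResBisim N) := by
  constructor
  · rintro r s ⟨R, hR, hrs⟩ t r' hr'
    obtain ⟨u, s', hlab, hs', hR'⟩ := hR.1 r s hrs t r' hr'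
    exact ⟨u, s', hlab, hs', R, hR, hR'⟩
  · rintro r s ⟨R, hR, hsr⟩ t r' hr'
    obtain ⟨u, s', hlab, hs', hR'⟩ := hR.2 r s hsr t r' hr'
    exact ⟨u, s', hlab, hs', R, hR, hR'⟩

/-- Resource bisimilarity is a congruence: `r ≃ s` implies `r + w ≃ s + w`; concretely the
relation `{(r+w, s+w) | r ≃ s}` is a resource bisimulation. -/
theorem resBisim_congruence (N : LPN P T Act) :
    IsResBisim N (fun a b => ∃ r s w : P → ℕ, ResBisim N r s ∧ a = r + w ∧ b = s + w) ∧
      ∀ r s w : P → ℕ, ResBisim N r s → ResBisim N (r + w) (s + w) := by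
  have h := (isResBisim_resBisim N).addClosure
  exact ⟨h, fun r s w hrs => ⟨_, h, r, s, w, hrs, rfl, rfl⟩⟩
end

section
/- Every congruence ρ on markings that is included in ∼ and is a (standard) bisimulation is a resource bisimulation, and hence ρ ⊆ ≃. -/
variable {P T Act : Type}

/-- Completing `r` by `pre t - r` is adding a marking, so a relation compatible with addition turns
the ordinary transfer from the completed markings into the resource transfer from `r`. -/
theorem Transfer.resTransfer {N : LPN P T Act} {R R' : (P → ℕ) → (P → ℕ) → Prop}
    (hadd : ∀ r s w, R r s → R (r + w) (s + w)) (h : Transfer N R R') : ResTransfer N R R' :=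
  fun r s hrs t _ hfire => h _ _ (hadd r s (fun p => N.pre t p - r p) hrs) t _ hfire

theorem IsBisim.isResBisim {N : LPN P T Act} {R : (P → ℕ) → (P → ℕ) → Prop}
    (hadd : ∀ r s w, R r s → R (r + w) (s + w)) (h : IsBisim N R) : IsResBisim N R :=
  ⟨h.1.resTransfer hadd, h.2.resTransfer fun r s w hsr => hadd s r w hsr⟩

theorem congruence_bisim_is_resBisim_general (N : LPN P T Act)
    (ρ : (P → ℕ) → (P → ℕ) → Prop) (hcong : IsCongruence ρ)
    (hbis : IsBisim N ρ) :
    IsResBisim N ρ ∧ ∀ r s, ρ r s → ResBisim N r s := by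
  have hres : IsResBisim N ρ := hbis.isResBisim hcong.2
  exact ⟨hres, fun r s hrs => ⟨ρ, hres, hrs⟩⟩

/-- Every congruence included in `∼` that is a (standard) bisimulation is a resource
bisimulation, and hence is included in `≃`. -/
theorem congruence_bisim_is_resBisim (N : LPN P T Act)
    (ρ : (P → ℕ) → (P → ℕ) → Prop) (hcong : IsCongruence ρ)
    (hsub : ∀ r s, ρ r s → Bisim N r s) (hbis : IsBisim N ρ) :
    IsResBisim N ρ ∧ ∀ r s, ρ r s → ResBisim N r s :=
  congruence_bisim_is_resBisim_general N ρ hcong hbis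
end

section
/- Each stratified resource-bisimilarity relation ≃ᵢ is a congruence on markings ℕ^P. -/
variable {P T Act : Type}

namespace LPN

variable (N : LPN P T Act)

def deficit (t : T) (M : P → ℕ) : P → ℕ := N.pre t - M

theorem pre_le_add_deficit (t : T) (M : P → ℕ) : N.pre t ≤ M + N.deficit t M :=
  fun p => by simp only [deficit, Pi.add_apply, Pi.sub_apply]; omega

theorem deficit_eq_zero_of_le {t : T} {M : P → ℕ} (h : N.pre t ≤ M) : N.deficit t M = 0 :=
  funext fun p => Nat.sub_eq_zero_of_le (h p)

theorem exists_add_deficit_add (t : T) (r w : P → ℕ) :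
    ∃ e : P → ℕ, ∀ s, s + w + N.deficit t (r + w) = s + N.deficit t r + e :=
  ⟨w + N.deficit t (r + w) - N.deficit t r, fun s => funext fun p => by
    simp only [deficit, Pi.add_apply, Pi.sub_apply]; omega⟩

end LPN

namespace Fires

variable {N : LPN P T Act} {M M₁ M₂ : P → ℕ} {t : T}

theorem of_le (h : N.pre t ≤ M) : Fires N M t (fun p => M p - N.pre t p + N.post t p) :=
  ⟨h, rfl⟩

theorem unique (h₁ : Fires N M t M₁) (h₂ : Fires N M t M₂) : M₁ = M₂ :=
  h₁.2.trans h₂.2.symm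

theorem add_right_s13 (h : Fires N M t M₁) (e : P → ℕ) : Fires N (M + e) t (M₁ + e) := by
  obtain ⟨hle, rfl⟩ := h
  refine ⟨hle.trans le_self_add, funext fun p => ?_⟩
  have hp : N.pre t p ≤ M p := hle p
  simp only [Pi.add_apply]
  omega

end Fires

def ResSimulates (N : LPN P T Act) (i : ℕ) (r s : P → ℕ) : Prop :=
  ∀ t r', Fires N (r + N.deficit t r) t r' →
    ∃ u s', N.lab u = N.lab t ∧ Fires N (s + N.deficit t r) u s' ∧ StratRes N i r' s'

theorem StratRes.succ_iff {N : LPN P T Act} {i : ℕ} {r s : P → ℕ} :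
    StratRes N (i + 1) r s ↔ ResSimulates N i r s ∧ ResSimulates N i s r :=
  Iff.rfl

namespace ResSimulates

variable {N : LPN P T Act} {i : ℕ} {r s : P → ℕ}

theorem exists_fires (h : ResSimulates N i r s) {t : T} {r' : P → ℕ} (hf : Fires N r t r') :
    ∃ u s', N.lab u = N.lab t ∧ Fires N s u s' ∧ StratRes N i r' s' := by
  have hzero := N.deficit_eq_zero_of_le hf.1
  rw [← add_zero r, ← hzero] at hf
  simpa only [hzero, add_zero] using h t r' hf

theorem add_right_s13 (ih : ∀ {a b w}, StratRes N i a b → StratRes N i (a + w) (b + w))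
    (h : ResSimulates N i r s) (w : P → ℕ) : ResSimulates N i (r + w) (s + w) := by
  intro t r' hf
  obtain ⟨e, he⟩ := N.exists_add_deficit_add t r w
  have hfire := Fires.of_le (N.pre_le_add_deficit t r)
  obtain ⟨u, s', hlab, hs, hrel⟩ := h t _ hfire
  have hr' := (hfire.add_right_s13 e).unique (he r ▸ hf)
  exact ⟨u, s' + e, hlab, he s ▸ hs.add_right_s13 e, hr' ▸ ih hrel⟩

end ResSimulates

namespace StratRes

variable {N : LPN P T Act} {i : ℕ}

theorem refl (i : ℕ) (r : P → ℕ) : StratRes N i r r := by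
  induction i generalizing r with
  | zero => trivial
  | succ i ih => exact ⟨fun t r' h => ⟨t, r', rfl, h, ih r'⟩, fun t r' h => ⟨t, r', rfl, h, ih r'⟩⟩

theorem symm {r s : P → ℕ} (h : StratRes N i r s) : StratRes N i s r := by
  cases i with
  | zero => trivial
  | succ i => exact ⟨h.2, h.1⟩

theorem add_right_s13 {r s : P → ℕ} (h : StratRes N i r s) (w : P → ℕ) :
    StratRes N i (r + w) (s + w) := by
  induction i generalizing r s w with
  | zero => trivial
  | succ i ih =>
    obtain ⟨hrs, hsr⟩ := succ_iff.mp h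
    exact ⟨hrs.add_right_s13 (ih · _) w, hsr.add_right_s13 (ih · _) w⟩

end StratRes

theorem ResSimulates.trans {N : LPN P T Act} {i : ℕ} {r s q : P → ℕ}
    (ih : ∀ {a b c}, StratRes N i a b → StratRes N i b c → StratRes N i a c)
    (h₁ : ResSimulates N i r s) (h₂ : StratRes N (i + 1) s q) : ResSimulates N i r q := by
  intro t r' hf
  obtain ⟨u, s', hlab, hs, hrel⟩ := h₁ t r' hf
  obtain ⟨v, q', hlab', hq, hrel'⟩ :=
    (StratRes.succ_iff.mp (h₂.add_right_s13 (N.deficit t r))).1.exists_fires hs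
  exact ⟨v, q', hlab'.trans hlab, hq, ih hrel hrel'⟩

theorem StratRes.trans {N : LPN P T Act} {i : ℕ} {r s q : P → ℕ} (h₁ : StratRes N i r s)
    (h₂ : StratRes N i s q) : StratRes N i r q := by
  induction i generalizing r s q with
  | zero => trivial
  | succ i ih =>
    exact ⟨(succ_iff.mp h₁).1.trans ih h₂, (succ_iff.mp h₂).2.trans ih h₁.symm⟩

/-- Each stratified resource-bisimilarity relation `≃ᵢ` is a congruence on markings. -/
theorem stratRes_congruence (N : LPN P T Act) (i : ℕ) :
    IsCongruence (StratRes N i) :=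
  ⟨⟨StratRes.refl i, StratRes.symm, StratRes.trans⟩, fun _ _ s h => h.add_right_s13 s⟩
end

section
/- In the REDUCE step of the tableau algorithm, the label (r̄, s̄) of the new child is strictly smaller than (r,s) in the cardinality-lexicographic order: either |r̄ + s̄| < |r + s|, or |r̄ + s̄| = |r + s| and r̄ + s̄ <_lex r + s. -/
/-- Cardinality of a multiset over a finite set. -/
def mcard {S : Type} [Fintype S] (m : S → ℕ) : ℕ := ∑ s, m s

/-- Strict lexicographic comparison of multisets viewed as vectors. -/
def lexLt {S : Type} [LinearOrder S] (m m' : S → ℕ) : Prop :=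
  Pi.Lex (· < ·) (· < ·) m m'

/-- `a` is strictly smaller than `b` in the cardinality-lexicographic order. -/
def cardLexLt {S : Type} [Fintype S] [LinearOrder S] (a b : S → ℕ) : Prop :=
  mcard a < mcard b ∨ (mcard a = mcard b ∧ lexLt a b)

/-!
The order `cardLexLt` is invariant under adding a common multiset to both sides, and each
REDUCE label sum is obtained from `r + s` by trading one of `r'`, `s'` for the other: writing
`c = r + (s - s')`, the first case compares `c + r'` with `c + s'`, and writing
`c = (r - r') + s`, the second compares `c + s'` with `c + r'`.
-/

theorem mcard_add {S : Type} [Fintype S] (a b : S → ℕ) :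
    mcard (a + b) = mcard a + mcard b :=
  Finset.sum_add_distrib

theorem lexLt.add_left {S : Type} [LinearOrder S] {a b : S → ℕ} (h : lexLt a b)
    (c : S → ℕ) : lexLt (c + a) (c + b) := by
  obtain ⟨i, hlt_eq, hi⟩ := h
  exact ⟨i, fun j hj => congrArg (c j + ·) (hlt_eq j hj), Nat.add_lt_add_left hi (c i)⟩

theorem cardLexLt.add_left {S : Type} [Fintype S] [LinearOrder S] {a b : S → ℕ}
    (h : cardLexLt a b) (c : S → ℕ) : cardLexLt (c + a) (c + b) := by
  unfold cardLexLt at h ⊢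
  rw [mcard_add, mcard_add]
  rcases h with hcard | ⟨hcard, hlex⟩
  · exact Or.inl (Nat.add_lt_add_left hcard _)
  · exact Or.inr ⟨by rw [hcard], hlex.add_left c⟩

theorem reduce_decreases_general {P : Type} [Fintype P] [LinearOrder P]
    (r s r' s' : P → ℕ) (hr : r' ≤ r) (hs : s' ≤ s) :
    ((mcard r' < mcard s' ∨ (mcard r' = mcard s' ∧ lexLt r' s')) →
      cardLexLt (r + ((s - s') + r')) (r + s)) ∧
    ((mcard s' < mcard r' ∨ (mcard r' = mcard s' ∧ lexLt s' r')) →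
      cardLexLt (((r - r') + s') + s) (r + s)) := by
  constructor
  · intro h
    have hsum : r + s = r + (s - s') + s' := by rw [add_assoc, tsub_add_cancel_of_le hs]
    rw [hsum, ← add_assoc]
    exact cardLexLt.add_left h _
  · intro h
    have hchild : r - r' + s' + s = r - r' + s + s' := add_right_comm _ _ _
    have hsum : r + s = r - r' + s + r' := by rw [add_right_comm, tsub_add_cancel_of_le hr]
    rw [hchild, hsum]
    exact cardLexLt.add_left (h.imp_right (And.imp_left Eq.symm)) _

/-- In the REDUCE step of the tableau algorithm, the label `(r̄, s̄)` of the new child is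
strictly smaller than `(r, s)` in the cardinality-lexicographic order (applied to the sums
`r̄ + s̄` and `r + s`): in the first case `(r̄,s̄) = (r, (s − s') + r')`, in the second
`(r̄,s̄) = ((r − r') + s', s)`. -/
theorem reduce_decreases {P : Type} [Fintype P] [LinearOrder P]
    (r s r' s' : P → ℕ) (hr : r' ≤ r) (hs : s' ≤ s) (hrs : r ≠ s) (hne : r' ≠ s') :
    ((mcard r' < mcard s' ∨ (mcard r' = mcard s' ∧ lexLt r' s')) →
      cardLexLt (r + ((s - s') + r')) (r + s)) ∧
    ((mcard s' < mcard r' ∨ (mcard r' = mcard s' ∧ lexLt s' r')) →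
      cardLexLt (((r - r') + s') + s) (r + s)) :=
  reduce_decreases_general r s r' s' hr hs
end
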